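/- arXiv:1508.01928 — 4 statements merged into one kernel-verified Lean document; each statement's English description precedes it below -/
import Mathlib

section
/- Let μ be a Borel probability measure on ℝ^N with finite second moment. Then the k-means functional F_{μ,k}(z_1,...,z_k) = ∫ d(x, {z_1,...,z_k})² dμ(x) attains its minimum over (ℝ^N)^k. -/
/-!
Allow centers in the one-point compactification `OnePoint E`, a center at `∞` being at distance
`⊤` from every point. On the compact space `(OnePoint E)^k` the cost is lower semicontinuous by
Fatou's lemma (neighbourhood filters are countably generated because `E` is proper), so it attains
its minimum. Moving the centers at `∞` to an arbitrary point of `E` does not increase the cost, and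
by the second-moment assumption the cost of a configuration in `E^k` is finite and equals the real
k-means integral.
-/

open MeasureTheory Filter Topology ENNReal Set

namespace OnePoint

variable {X : Type*} [MetricSpace X] [ProperSpace X]

instance : FirstCountableTopology (OnePoint X) := by
  refine ⟨fun p => ?_⟩
  induction p using OnePoint.rec with
  | infty =>
    rw [nhds_infty_eq, coclosedCompact_eq_cocompact]
    rcases isEmpty_or_nonempty X with _ | ⟨⟨x⟩⟩
    · rw [cocompact_eq_bot]
      infer_instance
    · rw [← comap_dist_left_atTop_eq_cocompact x]
      infer_instance
  | coe x =>
    rw [nhds_coe_eq]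
    infer_instance

theorem continuous_elim_top_edist (x : X) :
    Continuous fun p : OnePoint X => p.elim ⊤ (edist x) := by
  refine (OnePoint.continuous_iff _).2 ⟨?_, continuous_const.edist continuous_id⟩
  rw [coclosedCompact_eq_cocompact]
  simp only [edist_dist, OnePoint.elim_infty, OnePoint.elim_some]
  exact ENNReal.tendsto_ofReal_atTop.comp (tendsto_dist_left_cocompact_atTop x)

end OnePoint

section KMeansCost

variable {ι X : Type*} [MeasurableSpace X] (μ : Measure X)

noncomputable def kmeansCost [EDist X] (v : ι → OnePoint X) : ℝ≥0∞ :=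
  ∫⁻ x, (⨅ i, (v i).elim ⊤ (edist x)) ^ 2 ∂μ

theorem kmeansCost_coe_elim_le [EDist X] (y : X) (v : ι → OnePoint X) :
    kmeansCost μ (fun i => (((v i).elim y id : X) : OnePoint X)) ≤ kmeansCost μ v := by
  refine lintegral_mono fun x => pow_le_pow_left' (iInf_mono fun i => ?_) 2
  dsimp only
  generalize v i = p
  induction p using OnePoint.rec <;> simp

theorem lowerSemicontinuous_kmeansCost [Finite ι] [MetricSpace X] [ProperSpace X]
    [OpensMeasurableSpace X] : LowerSemicontinuous (kmeansCost μ : (ι → OnePoint X) → ℝ≥0∞) := by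
  have : Fintype ι := Fintype.ofFinite ι
  have hcont (x : X) :
      Continuous fun v : ι → OnePoint X => (⨅ i, (v i).elim ⊤ (edist x)) ^ 2 := by
    simp only [← Finset.inf_univ_eq_iInf]
    exact (ENNReal.continuous_pow 2).comp <| Continuous.finset_inf_apply fun i _ =>
      (OnePoint.continuous_elim_top_edist x).comp (continuous_apply i)
  have hmeas (v : ι → OnePoint X) :
      Measurable fun x => (⨅ i, (v i).elim ⊤ (edist x)) ^ 2 := by
    refine (Measurable.iInf fun i => ?_).pow_const 2
    induction v i using OnePoint.rec with
    | infty => exact measurable_const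
    | coe y => exact (continuous_id.edist continuous_const).measurable
  refine lowerSemicontinuous_iff_le_liminf.2 fun v => ?_
  calc kmeansCost μ v
      = ∫⁻ x, liminf (fun w : ι → OnePoint X => (⨅ i, (w i).elim ⊤ (edist x)) ^ 2) (𝓝 v) ∂μ :=
        lintegral_congr fun x => ((hcont x).tendsto v).liminf_eq.symm
    _ ≤ liminf (kmeansCost μ) (𝓝 v) := lintegral_liminf_le hmeas

theorem exists_forall_kmeansCost_le [Finite ι] [MetricSpace X] [ProperSpace X]
    [OpensMeasurableSpace X] :
    ∃ v : ι → OnePoint X, ∀ w : ι → OnePoint X, kmeansCost μ v ≤ kmeansCost μ w :=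
  have ⟨v, _, hv⟩ := (lowerSemicontinuous_kmeansCost μ).lowerSemicontinuousOn univ
    |>.exists_isMinOn univ_nonempty isCompact_univ
  ⟨v, fun w => hv (mem_univ w)⟩

variable [PseudoMetricSpace X]

theorem measurable_iInf_dist [OpensMeasurableSpace X] [Countable ι] (w : ι → X) :
    Measurable fun x => ⨅ i, dist x (w i) :=
  Measurable.iInf fun _ => (continuous_id.dist continuous_const).measurable

variable [Nonempty ι]

theorem lintegral_ofReal_sq_iInf_dist (w : ι → X) :
    ∫⁻ x, ENNReal.ofReal ((⨅ i, dist x (w i)) ^ 2) ∂μ = kmeansCost μ fun i => (w i : OnePoint X) := by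
  refine lintegral_congr fun x => ?_
  rw [ENNReal.ofReal_pow (Real.iInf_nonneg fun i => dist_nonneg), ENNReal.ofReal_iInf]
  simp [edist_dist]

theorem integral_sq_iInf_dist_eq_toReal_kmeansCost [OpensMeasurableSpace X] [Countable ι]
    (w : ι → X) :
    ∫ x, (⨅ i, dist x (w i)) ^ 2 ∂μ = (kmeansCost μ fun i => (w i : OnePoint X)).toReal := by
  rw [← lintegral_ofReal_sq_iInf_dist, integral_eq_lintegral_of_nonneg_ae
    (ae_of_all _ fun x => by positivity) ((measurable_iInf_dist w).pow_const 2).aestronglyMeasurable]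

end KMeansCost

section SecondMoment

variable {ι E : Type*} [Countable ι] [Nonempty ι] [NormedAddCommGroup E] [MeasurableSpace E]
  [OpensMeasurableSpace E] {μ : Measure E} [IsFiniteMeasure μ]

theorem integrable_sq_iInf_dist (h2 : Integrable (fun x => ‖x‖ ^ 2) μ) (w : ι → E) :
    Integrable (fun x => (⨅ i, dist x (w i)) ^ 2) μ := by
  obtain ⟨i₀⟩ := ‹Nonempty ι›
  refine ((h2.const_mul 2).add (integrable_const (2 * ‖w i₀‖ ^ 2))).mono'
    ((measurable_iInf_dist w).pow_const 2).aestronglyMeasurable (ae_of_all _ fun x => ?_)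
  have hnonneg : 0 ≤ ⨅ i, dist x (w i) := Real.iInf_nonneg fun i => dist_nonneg
  have hle : ⨅ i, dist x (w i) ≤ ‖x‖ + ‖w i₀‖ :=
    (ciInf_le ⟨0, forall_mem_range.2 fun i => dist_nonneg⟩ i₀).trans
      (dist_le_norm_add_norm x (w i₀))
  rw [Real.norm_of_nonneg (by positivity), Pi.add_apply]
  nlinarith [sq_nonneg (‖x‖ - ‖w i₀‖)]

theorem kmeansCost_coe_ne_top (h2 : Integrable (fun x => ‖x‖ ^ 2) μ) (w : ι → E) :
    kmeansCost μ (fun i => (w i : OnePoint E)) ≠ ⊤ := by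
  rw [← lintegral_ofReal_sq_iInf_dist]
  exact ((hasFiniteIntegral_iff_ofReal (ae_of_all _ fun x => by positivity)).1
    (integrable_sq_iInf_dist h2 w).2).ne

end SecondMoment

/-- The k-means functional `F_{μ,k}(z) = ∫ d(x, {z_1,…,z_k})² dμ(x)` of a Borel probability
measure with finite second moment attains its minimum over `(ℝ^N)^k`. -/
theorem kmeans_min_exists (N k : ℕ) (hk : 0 < k)
    (μ : Measure (EuclideanSpace ℝ (Fin N))) [IsProbabilityMeasure μ]
    (h2 : Integrable (fun x => ‖x‖ ^ 2) μ) :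
    ∃ z : Fin k → EuclideanSpace ℝ (Fin N),
      ∀ w : Fin k → EuclideanSpace ℝ (Fin N),
        ∫ x, (⨅ i, dist x (z i)) ^ 2 ∂μ ≤ ∫ x, (⨅ i, dist x (w i)) ^ 2 ∂μ := by
  have : Nonempty (Fin k) := ⟨⟨0, hk⟩⟩
  obtain ⟨v, hv⟩ := exists_forall_kmeansCost_le (ι := Fin k) μ
  refine ⟨fun i => (v i).elim 0 id, fun w => ?_⟩
  rw [integral_sq_iInf_dist_eq_toReal_kmeansCost, integral_sq_iInf_dist_eq_toReal_kmeansCost]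
  exact ENNReal.toReal_mono (kmeansCost_coe_ne_top h2 w)
    ((kmeansCost_coe_elim_le μ 0 v).trans (hv _))
end

section
/- Let μ, ν be Borel probability measures on ℝ^N with finite second moments, let d₂(μ,ν) denote the 2-Wasserstein distance, and let F_{μ,k}, F_{ν,k} denote the k-means functionals. Then for every z = (z_1,...,z_k) ∈ (ℝ^N)^k, |F_{μ,k}(z) - F_{ν,k}(z)| ≤ d₂(μ,ν)·(2 min{√F_{μ,k}(z), √F_{ν,k}(z)} + d₂(μ,ν)). -/
open MeasureTheory

/-- The 2-Wasserstein distance between two Borel probability measures on `ℝ^N`: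
the infimum over couplings `π` of `(∬ |x-y|² dπ)^{1/2}`. -/
noncomputable def wasserstein2 {N : ℕ} (μ ν : Measure (EuclideanSpace ℝ (Fin N))) : ℝ :=
  sInf { r : ℝ | ∃ π : Measure (EuclideanSpace ℝ (Fin N) × EuclideanSpace ℝ (Fin N)),
      π.fst = μ ∧ π.snd = ν ∧ r = Real.sqrt (∫ p, dist p.1 p.2 ^ 2 ∂π) }

/-- The k-means functional `F_{μ,k}(z) = ∫ min_i |x - z_i|² dμ(x)`. -/
noncomputable def kmeansF {N k : ℕ} (μ : Measure (EuclideanSpace ℝ (Fin N)))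
    (z : Fin k → EuclideanSpace ℝ (Fin N)) : ℝ :=
  ∫ x, (⨅ i, dist x (z i)) ^ 2 ∂μ

/-! `x ↦ min_i |x - z_i|` is 1-Lipschitz, so for any coupling `π` of `μ` and `ν` its
compositions with the two projections differ pointwise by at most `|x - y|`. The reverse
triangle inequality in `L²(π)` then gives `|√F_{μ,k}(z) - √F_{ν,k}(z)| ≤ (∬ |x-y|² dπ)^{1/2}`,
hence `≤ d₂(μ,ν)` after taking the infimum over couplings, and
`|a² - b²| = |a - b| (a + b) ≤ |a - b| (2 min a b + |a - b|)` finishes. -/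

section L2

variable {Ω : Type*} [MeasurableSpace Ω] {μ : Measure Ω} {F G : Ω → ℝ}

theorem MeasureTheory.MemLp.norm_toLp_two (hF : MemLp F 2 μ) :
    ‖hF.toLp F‖ = √(∫ ω, F ω ^ 2 ∂μ) := by
  have h : ∫ ω, F ω ^ 2 ∂μ = ‖hF.toLp F‖ ^ 2 := by
    rw [← real_inner_self_eq_norm_sq, L2.inner_def]
    refine integral_congr_ae ?_
    filter_upwards [hF.coeFn_toLp] with ω hω
    simp [hω, sq]
  rw [h, Real.sqrt_sq (norm_nonneg _)]

theorem abs_sqrt_integral_sq_sub_le (hF : MemLp F 2 μ) (hG : MemLp G 2 μ) :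
    |√(∫ ω, F ω ^ 2 ∂μ) - √(∫ ω, G ω ^ 2 ∂μ)| ≤ √(∫ ω, (F ω - G ω) ^ 2 ∂μ) := by
  have h := abs_norm_sub_norm_le (hF.toLp F) (hG.toLp G)
  rwa [← MemLp.toLp_sub, hF.norm_toLp_two, hG.norm_toLp_two, (hF.sub hG).norm_toLp_two] at h

end L2

theorem LipschitzWith.memLp_comp {α E F : Type*} [MeasurableSpace α] {μ : Measure α}
    [IsFiniteMeasure μ] [NormedAddCommGroup E] [NormedAddCommGroup F] {p : ENNReal} {K : NNReal}
    {f : E → F} (hf : LipschitzWith K f) {X : α → E} (hX : MemLp X p μ) :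
    MemLp (f ∘ X) p μ := by
  have h0 : LipschitzWith K fun x => f x - f 0 := by
    simpa using hf.sub (LipschitzWith.const (f 0))
  convert (h0.comp_memLp (by simp) hX).add (memLp_const (f 0)) using 1
  ext; simp

-- For empty `ι` the infimum is the junk value `0`, which is still 1-Lipschitz.
theorem lipschitzWith_iInf_dist {X ι : Type*} [PseudoMetricSpace X] (z : ι → X) :
    LipschitzWith 1 fun x => ⨅ i, dist x (z i) := by
  refine LipschitzWith.of_le_add fun x y => ?_
  rcases isEmpty_or_nonempty ι with _ | _
  · simp [Real.iInf_of_isEmpty]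
  · rw [← sub_le_iff_le_add]
    refine le_ciInf fun i => ?_
    have hx : ⨅ i, dist x (z i) ≤ dist x (z i) :=
      ciInf_le ⟨0, Set.forall_mem_range.2 fun _ => dist_nonneg⟩ i
    linarith [dist_triangle x y (z i)]

theorem abs_sqrt_integral_sq_sub_le_of_coupling {X : Type*} [PseudoMetricSpace X]
    [MeasurableSpace X] {f : X → ℝ} (hf : LipschitzWith 1 f) {π : Measure (X × X)}
    (hfst : MemLp f 2 π.fst) (hsnd : MemLp f 2 π.snd)
    (hdist : Integrable (fun p => dist p.1 p.2 ^ 2) π) :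
    |√(∫ x, f x ^ 2 ∂π.fst) - √(∫ x, f x ^ 2 ∂π.snd)| ≤ √(∫ p, dist p.1 p.2 ^ 2 ∂π) := by
  have h1 : MemLp (f ∘ Prod.fst) 2 π := hfst.comp_of_map measurable_fst.aemeasurable
  have h2 : MemLp (f ∘ Prod.snd) 2 π := hsnd.comp_of_map measurable_snd.aemeasurable
  rw [Measure.fst, Measure.snd,
    integral_map (f := fun x => f x ^ 2) measurable_fst.aemeasurable (hfst.1.pow 2),
    integral_map (f := fun x => f x ^ 2) measurable_snd.aemeasurable (hsnd.1.pow 2)]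
  refine (abs_sqrt_integral_sq_sub_le h1 h2).trans (Real.sqrt_le_sqrt ?_)
  refine integral_mono (h1.sub h2).integrable_sq hdist fun p => ?_
  have h := hf.dist_le_mul p.1 p.2
  rw [NNReal.coe_one, one_mul, Real.dist_eq] at h
  simpa only [Function.comp, sq_abs] using pow_le_pow_left₀ (abs_nonneg _) h 2

theorem integrable_dist_sq_of_memLp_fst_snd {E : Type*} [NormedAddCommGroup E]
    [MeasurableSpace E] [OpensMeasurableSpace E] {π : Measure (E × E)}
    (hfst : MemLp id 2 π.fst) (hsnd : MemLp id 2 π.snd) :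
    Integrable (fun p => dist p.1 p.2 ^ 2) π := by
  have h1 : MemLp Prod.fst 2 π := hfst.comp_of_map measurable_fst.aemeasurable
  have h2 : MemLp Prod.snd 2 π := hsnd.comp_of_map measurable_snd.aemeasurable
  simpa only [dist_eq_norm, Pi.sub_apply] using
    (memLp_two_iff_integrable_sq_norm (h1.sub h2).1).1 (h1.sub h2)

theorem abs_sqrt_integral_sq_sub_le_wasserstein2 {N : ℕ}
    {μ ν : Measure (EuclideanSpace ℝ (Fin N))}
    [IsProbabilityMeasure μ] [IsProbabilityMeasure ν]
    (h2μ : Integrable (fun x => ‖x‖ ^ 2) μ) (h2ν : Integrable (fun x => ‖x‖ ^ 2) ν)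
    {f : EuclideanSpace ℝ (Fin N) → ℝ} (hf : LipschitzWith 1 f) :
    |√(∫ x, f x ^ 2 ∂μ) - √(∫ x, f x ^ 2 ∂ν)| ≤ wasserstein2 μ ν := by
  have hμ : MemLp id 2 μ := (memLp_two_iff_integrable_sq_norm aestronglyMeasurable_id).2 h2μ
  have hν : MemLp id 2 ν := (memLp_two_iff_integrable_sq_norm aestronglyMeasurable_id).2 h2ν
  refine le_csInf ⟨_, μ.prod ν, Measure.fst_prod, Measure.snd_prod, rfl⟩ ?_
  rintro r ⟨π, rfl, rfl, rfl⟩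
  exact abs_sqrt_integral_sq_sub_le_of_coupling hf (hf.memLp_comp hμ) (hf.memLp_comp hν)
    (integrable_dist_sq_of_memLp_fst_snd hμ hν)

theorem abs_sq_sub_sq_le_of_abs_sub_le {a b w : ℝ} (ha : 0 ≤ a) (hb : 0 ≤ b) (h : |a - b| ≤ w) :
    |a ^ 2 - b ^ 2| ≤ w * (2 * min a b + w) := by
  rw [show a ^ 2 - b ^ 2 = (a - b) * (a + b) by ring, abs_mul, abs_of_nonneg (add_nonneg ha hb)]
  have hsum : a + b ≤ 2 * min a b + w := by
    rcases le_total a b with hab | hab <;> [rw [min_eq_left hab]; rw [min_eq_right hab]] <;>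
      linarith [abs_le.1 h]
  exact mul_le_mul h hsum (add_nonneg ha hb) ((abs_nonneg _).trans h)

theorem kmeans_wasserstein_stability_general (N k : ℕ)
    (μ ν : Measure (EuclideanSpace ℝ (Fin N)))
    [IsProbabilityMeasure μ] [IsProbabilityMeasure ν]
    (h2μ : Integrable (fun x => ‖x‖ ^ 2) μ) (h2ν : Integrable (fun x => ‖x‖ ^ 2) ν)
    (z : Fin k → EuclideanSpace ℝ (Fin N)) :
    |kmeansF μ z - kmeansF ν z|
      ≤ wasserstein2 μ ν *
        (2 * min (Real.sqrt (kmeansF μ z)) (Real.sqrt (kmeansF ν z)) + wasserstein2 μ ν) := by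
  have hF : ∀ ρ : Measure (EuclideanSpace ℝ (Fin N)), √(kmeansF ρ z) ^ 2 = kmeansF ρ z :=
    fun ρ => Real.sq_sqrt (integral_nonneg fun _ => sq_nonneg _)
  have key : |√(kmeansF μ z) - √(kmeansF ν z)| ≤ wasserstein2 μ ν :=
    abs_sqrt_integral_sq_sub_le_wasserstein2 h2μ h2ν (lipschitzWith_iInf_dist z)
  simpa only [hF] using abs_sq_sub_sq_le_of_abs_sub_le (Real.sqrt_nonneg _) (Real.sqrt_nonneg _) key

/-- Stability of the k-means functional with respect to the Wasserstein distance: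
`|F_{μ,k}(z) - F_{ν,k}(z)| ≤ d₂(μ,ν)(2 min{√F_{μ,k}(z), √F_{ν,k}(z)} + d₂(μ,ν))`. -/
theorem kmeans_wasserstein_stability (N k : ℕ) (hk : 0 < k)
    (μ ν : Measure (EuclideanSpace ℝ (Fin N)))
    [IsProbabilityMeasure μ] [IsProbabilityMeasure ν]
    (h2μ : Integrable (fun x => ‖x‖ ^ 2) μ) (h2ν : Integrable (fun x => ‖x‖ ^ 2) ν)
    (z : Fin k → EuclideanSpace ℝ (Fin N)) :
    |kmeansF μ z - kmeansF ν z|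
      ≤ wasserstein2 μ ν *
        (2 * min (Real.sqrt (kmeansF μ z)) (Real.sqrt (kmeansF ν z)) + wasserstein2 μ ν) :=
  kmeans_wasserstein_stability_general N k μ ν h2μ h2ν z
end

section
/- Let μ be a Borel probability measure on ℝ^N with finite second moment whose support has at least k points, and suppose μ_m → μ in the 2-Wasserstein distance. Then min_z F_{μ_m,k}(z) → min_z F_{μ,k}(z) as m → ∞. -/
open MeasureTheory Filter

/-- The support of a Borel measure: points all of whose neighborhoods have positive measure. -/
def measSupport {N : ℕ} (μ : Measure (EuclideanSpace ℝ (Fin N))) :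
    Set (EuclideanSpace ℝ (Fin N)) :=
  {x | ∀ ε > 0, 0 < μ (Metric.ball x ε)}

/-!
The map `x ↦ min_i |x - z_i|` is the distance to the finite set `{z_i}`, hence 1-Lipschitz.
So for every coupling `π` of `μ` and `ν`, Minkowski's inequality in `L²(π)` gives
`√F_{μ,k}(z) ≤ √F_{ν,k}(z) + (∫ |x - y|² dπ)^{1/2}`. Taking the infimum over couplings and then
over `z` shows that `μ ↦ √(min_z F_{μ,k}(z))` is 1-Lipschitz for `d₂`, and continuity of the square
finishes the proof.
-/

open scoped Topology

theorem Real.sqrt_iInf {ι : Sort*} [Nonempty ι] {f : ι → ℝ} (hf : BddBelow (Set.range f)) :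
    √(⨅ i, f i) = ⨅ i, √(f i) :=
  Real.sqrt_monotone.map_ciInf_of_continuousAt Real.continuous_sqrt.continuousAt hf

-- This holds for empty `ι` too, both sides being the junk value `0`.
theorem iInf_dist_eq_infDist {X ι : Type*} [PseudoMetricSpace X] (x : X) (z : ι → X) :
    ⨅ i, dist x (z i) = Metric.infDist x (Set.range z) := by
  rw [Metric.infDist_eq_iInf, iInf, iInf]
  congr 1
  ext r
  simp

theorem LipschitzWith.comp_memLp_of_isFiniteMeasure {α E F : Type*} [MeasurableSpace α]
    {μ : Measure α} [IsFiniteMeasure μ] [NormedAddCommGroup E] [NormedAddCommGroup F]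
    {p : ENNReal} {K : NNReal} {g : E → F} (hg : LipschitzWith K g) {f : α → E}
    (hf : MemLp f p μ) : MemLp (g ∘ f) p μ := by
  have hg' : LipschitzWith K (fun x => g x - g 0) := by
    simpa using hg.sub (LipschitzWith.const (g 0))
  convert (hg'.comp_memLp (by simp) hf).add (memLp_const (g 0)) using 1
  ext x
  simp

section Minkowski

variable {α : Type*} [MeasurableSpace α] {μ : Measure α}

theorem MeasureTheory.MemLp.sqrt_integral_sq {f : α → ℝ} (hf : MemLp f 2 μ) :
    √(∫ x, f x ^ 2 ∂μ) = (eLpNorm f 2 μ).toReal := by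
  rw [hf.eLpNorm_eq_integral_rpow_norm two_ne_zero ENNReal.ofNat_ne_top,
    ENNReal.toReal_ofReal (by positivity), Real.sqrt_eq_rpow]
  norm_num

theorem sqrt_integral_sq_le_add {f g h : α → ℝ} (hf : AEStronglyMeasurable f μ)
    (hg : MemLp g 2 μ) (hh : MemLp h 2 μ) (hfgh : ∀ x, ‖f x‖ ≤ ‖g x‖ + ‖h x‖) :
    √(∫ x, f x ^ 2 ∂μ) ≤ √(∫ x, g x ^ 2 ∂μ) + √(∫ x, h x ^ 2 ∂μ) := by
  have hf₂ : MemLp f 2 μ := (hg.norm.add hh.norm).mono hf <| ae_of_all _ fun x =>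
    (hfgh x).trans (le_abs_self _)
  have hle : eLpNorm f 2 μ ≤ eLpNorm g 2 μ + eLpNorm h 2 μ := calc
    eLpNorm f 2 μ ≤ eLpNorm (fun x => ‖g x‖ + ‖h x‖) 2 μ :=
      eLpNorm_mono fun x => (hfgh x).trans (le_abs_self _)
    _ ≤ eLpNorm (fun x => ‖g x‖) 2 μ + eLpNorm (fun x => ‖h x‖) 2 μ :=
      eLpNorm_add_le hg.norm.1 hh.norm.1 (by norm_num)
    _ = eLpNorm g 2 μ + eLpNorm h 2 μ := by rw [eLpNorm_norm, eLpNorm_norm]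
  rw [hf₂.sqrt_integral_sq, hg.sqrt_integral_sq, hh.sqrt_integral_sq,
    ← ENNReal.toReal_add hg.2.ne hh.2.ne]
  exact ENNReal.toReal_mono (ENNReal.add_ne_top.2 ⟨hg.2.ne, hh.2.ne⟩) hle

end Minkowski

theorem LipschitzWith.sqrt_integral_sq_le_of_coupling {X : Type*} [PseudoMetricSpace X]
    [MeasurableSpace X] [OpensMeasurableSpace X] {μ ν : Measure X} {π : Measure (X × X)}
    {f : X → ℝ} (hf : LipschitzWith 1 f)
    (hπμ : π.fst = μ) (hπν : π.snd = ν) (hfν : MemLp f 2 ν)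
    (hdist : MemLp (fun p : X × X => dist p.1 p.2) 2 π) :
    √(∫ x, f x ^ 2 ∂μ) ≤ √(∫ x, f x ^ 2 ∂ν) + √(∫ p, dist p.1 p.2 ^ 2 ∂π) := by
  subst hπμ hπν
  have hsq : Continuous fun x => f x ^ 2 := hf.continuous.pow 2
  rw [Measure.fst, Measure.snd, integral_map measurable_fst.aemeasurable hsq.aestronglyMeasurable,
    integral_map measurable_snd.aemeasurable hsq.aestronglyMeasurable]
  refine sqrt_integral_sq_le_add (hf.continuous.measurable.comp measurable_fst).aestronglyMeasurable
    ?_ hdist fun p => ?_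
  · exact (memLp_map_measure_iff hfν.1 measurable_snd.aemeasurable).1 hfν
  · have := hf.dist_le_mul p.1 p.2
    rw [NNReal.coe_one, one_mul, Real.dist_eq] at this
    rw [Real.norm_eq_abs, Real.norm_eq_abs, Real.norm_eq_abs, abs_of_nonneg dist_nonneg]
    linarith [abs_sub_abs_le_abs_sub (f p.1) (f p.2)]

theorem memLp_dist_fst_snd {E : Type*} [NormedAddCommGroup E] [MeasurableSpace E]
    {μ ν : Measure E} {π : Measure (E × E)} (hπμ : π.fst = μ) (hπν : π.snd = ν)
    (hμ : MemLp id 2 μ) (hν : MemLp id 2 ν) :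
    MemLp (fun p : E × E => dist p.1 p.2) 2 π := by
  subst hπμ hπν
  have h₁ : MemLp Prod.fst 2 π := (memLp_map_measure_iff hμ.1 measurable_fst.aemeasurable).1 hμ
  have h₂ : MemLp Prod.snd 2 π := (memLp_map_measure_iff hν.1 measurable_snd.aemeasurable).1 hν
  simp_rw [dist_eq_norm]
  exact (h₁.sub h₂).norm

section KMeans

variable {N k : ℕ}

local notation "E" => EuclideanSpace ℝ (Fin N)

theorem kmeansF_eq_integral_infDist_sq (μ : Measure E) (z : Fin k → E) :
    kmeansF μ z = ∫ x, Metric.infDist x (Set.range z) ^ 2 ∂μ := by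
  simp only [kmeansF, iInf_dist_eq_infDist]

theorem kmeansF_nonneg (μ : Measure E) (z : Fin k → E) : 0 ≤ kmeansF μ z :=
  integral_nonneg fun _ => sq_nonneg _

theorem sqrt_kmeansF_le_add_wasserstein2 (μ ν : Measure E) [IsProbabilityMeasure μ]
    [IsProbabilityMeasure ν] (hμ : MemLp id 2 μ) (hν : MemLp id 2 ν) (z : Fin k → E) :
    √(kmeansF μ z) ≤ √(kmeansF ν z) + wasserstein2 μ ν := by
  rw [← sub_le_iff_le_add']
  refine le_csInf ⟨_, μ.prod ν, Measure.fst_prod, Measure.snd_prod, rfl⟩ ?_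
  rintro _ ⟨π, hπμ, hπν, rfl⟩
  rw [sub_le_iff_le_add', kmeansF_eq_integral_infDist_sq, kmeansF_eq_integral_infDist_sq]
  have hL : LipschitzWith 1 (Metric.infDist · (Set.range z)) := Metric.lipschitz_infDist_pt _
  exact hL.sqrt_integral_sq_le_of_coupling hπμ hπν (hL.comp_memLp_of_isFiniteMeasure hν)
    (memLp_dist_fst_snd hπμ hπν hμ hν)

theorem sqrt_iInf_kmeansF_le_add_wasserstein2 (μ ν : Measure E) [IsProbabilityMeasure μ]
    [IsProbabilityMeasure ν] (hμ : MemLp id 2 μ) (hν : MemLp id 2 ν) :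
    √(⨅ z : Fin k → E, kmeansF μ z) ≤ √(⨅ z : Fin k → E, kmeansF ν z) + wasserstein2 μ ν := by
  have hbdd : ∀ ρ : Measure E, BddBelow (Set.range fun z : Fin k → E => kmeansF ρ z) :=
    fun ρ => ⟨0, Set.forall_mem_range.2 (kmeansF_nonneg ρ)⟩
  rw [Real.sqrt_iInf (hbdd μ), Real.sqrt_iInf (hbdd ν), ciInf_add]
  · exact ciInf_mono ⟨0, Set.forall_mem_range.2 fun _ => Real.sqrt_nonneg _⟩
      (sqrt_kmeansF_le_add_wasserstein2 μ ν hμ hν)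
  · exact ⟨0, Set.forall_mem_range.2 fun _ => Real.sqrt_nonneg _⟩

theorem wasserstein2_le_swap (μ ν : Measure E) [IsProbabilityMeasure μ]
    [IsProbabilityMeasure ν] :
    wasserstein2 μ ν ≤ wasserstein2 ν μ := by
  refine le_csInf ⟨_, ν.prod μ, Measure.fst_prod, Measure.snd_prod, rfl⟩ ?_
  rintro _ ⟨π, hπν, hπμ, rfl⟩
  refine csInf_le ⟨0, ?_⟩ ⟨π.map Prod.swap, ?_, ?_, ?_⟩
  · rintro _ ⟨_, _, _, rfl⟩
    exact Real.sqrt_nonneg _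
  · rwa [Measure.fst, Measure.map_map measurable_fst measurable_swap]
  · rwa [Measure.snd, Measure.map_map measurable_snd measurable_swap]
  · rw [integral_map (f := fun p : E × E => dist p.1 p.2 ^ 2) measurable_swap.aemeasurable
      ((continuous_fst.dist continuous_snd).pow 2).aestronglyMeasurable]
    simp only [Prod.fst_swap, Prod.snd_swap, dist_comm]

theorem wasserstein2_comm (μ ν : Measure E) [IsProbabilityMeasure μ] [IsProbabilityMeasure ν] :
    wasserstein2 μ ν = wasserstein2 ν μ :=
  (wasserstein2_le_swap μ ν).antisymm (wasserstein2_le_swap ν μ)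

theorem dist_sqrt_iInf_kmeansF_le_wasserstein2 (μ ν : Measure E) [IsProbabilityMeasure μ]
    [IsProbabilityMeasure ν] (hμ : MemLp id 2 μ) (hν : MemLp id 2 ν) :
    dist √(⨅ z : Fin k → E, kmeansF μ z) √(⨅ z : Fin k → E, kmeansF ν z) ≤ wasserstein2 μ ν := by
  rw [Real.dist_eq, abs_sub_le_iff, sub_le_iff_le_add', sub_le_iff_le_add']
  exact ⟨sqrt_iInf_kmeansF_le_add_wasserstein2 μ ν hμ hν,
    wasserstein2_comm μ ν ▸ sqrt_iInf_kmeansF_le_add_wasserstein2 ν μ hν hμ⟩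

end KMeans

theorem kmeans_min_value_stability_general (N k : ℕ)
    (μ : Measure (EuclideanSpace ℝ (Fin N))) [IsProbabilityMeasure μ]
    (h2 : Integrable (fun x => ‖x‖ ^ 2) μ)
    (μs : ℕ → Measure (EuclideanSpace ℝ (Fin N)))
    (hprob : ∀ m, IsProbabilityMeasure (μs m))
    (h2s : ∀ m, Integrable (fun x => ‖x‖ ^ 2) (μs m))
    (hconv : Tendsto (fun m => wasserstein2 (μs m) μ) atTop (nhds 0)) :
    Tendsto (fun m => ⨅ z : Fin k → EuclideanSpace ℝ (Fin N), kmeansF (μs m) z)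
      atTop (nhds (⨅ z : Fin k → EuclideanSpace ℝ (Fin N), kmeansF μ z)) := by
  have hmoment : ∀ ν : Measure (EuclideanSpace ℝ (Fin N)),
      Integrable (fun x => ‖x‖ ^ 2) ν → MemLp id 2 ν :=
    fun ν h => (memLp_two_iff_integrable_sq_norm aestronglyMeasurable_id).2 h
  have hsqrt : Tendsto (fun m => √(⨅ z : Fin k → EuclideanSpace ℝ (Fin N), kmeansF (μs m) z))
      atTop (𝓝 √(⨅ z : Fin k → EuclideanSpace ℝ (Fin N), kmeansF μ z)) :=
    tendsto_iff_dist_tendsto_zero.2 <| squeeze_zero (fun _ => dist_nonneg)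
      (fun m => dist_sqrt_iInf_kmeansF_le_wasserstein2 (μs m) μ (hmoment _ (h2s m))
        (hmoment μ h2)) hconv
  have hnonneg : ∀ ρ : Measure (EuclideanSpace ℝ (Fin N)),
      0 ≤ ⨅ z : Fin k → EuclideanSpace ℝ (Fin N), kmeansF ρ z :=
    fun ρ => Real.iInf_nonneg (kmeansF_nonneg ρ)
  simpa only [Real.sq_sqrt (hnonneg _)] using hsqrt.pow 2

/-- If `μ_m → μ` in the 2-Wasserstein distance and the support of `μ` has at least `k` points,
then the minimal k-means values converge: `min_z F_{μ_m,k}(z) → min_z F_{μ,k}(z)`. -/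
theorem kmeans_min_value_stability (N k : ℕ) (hk : 0 < k)
    (μ : Measure (EuclideanSpace ℝ (Fin N))) [IsProbabilityMeasure μ]
    (h2 : Integrable (fun x => ‖x‖ ^ 2) μ)
    (hsupp : (k : ℕ∞) ≤ (measSupport μ).encard)
    (μs : ℕ → Measure (EuclideanSpace ℝ (Fin N)))
    (hprob : ∀ m, IsProbabilityMeasure (μs m))
    (h2s : ∀ m, Integrable (fun x => ‖x‖ ^ 2) (μs m))
    (hconv : Tendsto (fun m => wasserstein2 (μs m) μ) atTop (nhds 0)) :
    Tendsto (fun m => ⨅ z : Fin k → EuclideanSpace ℝ (Fin N), kmeansF (μs m) z)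
      atTop (nhds (⨅ z : Fin k → EuclideanSpace ℝ (Fin N), kmeansF μ z)) :=
  kmeans_min_value_stability_general N k μ h2 μs hprob h2s hconv
end

section
/- Let μ_n, μ be Borel probability measures on ℝ^N with finite second moments, with μ_n → μ in the Wasserstein sense. Let A_n be μ_n-measurable sets and A a μ-measurable set. Then (μ_n, χ_{A_n}) → (μ, χ_A) in TL² if and only if the restricted measures μ_n⌊A_n converge weakly to μ⌊A. -/
open MeasureTheory Filter

/-- The `TL²` distance between `(μ, f)` and `(θ, g)`. -/
noncomputable def dTL2 {N : ℕ} (μ θ : Measure (EuclideanSpace ℝ (Fin N)))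
    (f g : EuclideanSpace ℝ (Fin N) → ℝ) : ℝ :=
  sInf { r : ℝ | ∃ π : Measure (EuclideanSpace ℝ (Fin N) × EuclideanSpace ℝ (Fin N)),
      π.fst = μ ∧ π.snd = θ ∧
      r = Real.sqrt (∫ p, dist p.1 p.2 ^ 2 + dist (f p.1) (g p.2) ^ 2 ∂π) }

/-!
Take couplings `π n` of `μs n` and `μ` with `∫ ‖x - y‖² dπ n → 0`. Since `μ` is tight and a bounded
continuous `g` is uniformly continuous near each compact set, `∫ |g x - g y| dπ n → 0`; hence
`∫ g d(μs n⌊As n) - ∫ g d(μ⌊A)` is asymptotic to `∫ (χ_{As n} x - χ_A y) g y dπ n`.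
This is at most `‖g‖ ∫ |χ_{As n} x - χ_A y|² dπ n`, which gives one direction. Conversely,
indicators take values in `{0, 1}`, so `|χ_{As n} x - χ_A y|² = (χ_{As n} x - χ_A y) (1 - 2 χ_A y)`, and
approximating `1 - 2 χ_A` in `L¹(μ)` by a bounded continuous function shows that the `TL²` mismatch
of the couplings tends to zero.
-/

open Topology BoundedContinuousFunction

section Marginals

variable {α β : Type*} [MeasurableSpace α] [MeasurableSpace β] {π : Measure (α × β)}
  {μ : Measure α} {ν : Measure β}

lemma isFiniteMeasure_of_snd_eq [IsFiniteMeasure ν] (h : π.snd = ν) : IsFiniteMeasure π :=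
  ⟨by rw [← Measure.snd_univ, h]; exact measure_lt_top ν _⟩

lemma integral_comp_fst_of_fst_eq (h : π.fst = μ) {g : α → ℝ} (hg : AEStronglyMeasurable g μ) :
    ∫ p, g p.1 ∂π = ∫ x, g x ∂μ := by
  subst h; exact (integral_map measurable_fst.aemeasurable hg).symm

lemma integral_comp_snd_of_snd_eq (h : π.snd = ν) {g : β → ℝ} (hg : AEStronglyMeasurable g ν) :
    ∫ p, g p.2 ∂π = ∫ y, g y ∂ν := by
  subst h; exact (integral_map measurable_snd.aemeasurable hg).symm

lemma MeasureTheory.Integrable.comp_fst_of_fst_eq (h : π.fst = μ) {g : α → ℝ}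
    (hg : Integrable g μ) :
    Integrable (fun p => g p.1) π := by
  subst h; exact (integrable_map_measure hg.1 measurable_fst.aemeasurable).1 hg

lemma MeasureTheory.Integrable.comp_snd_of_snd_eq (h : π.snd = ν) {g : β → ℝ}
    (hg : Integrable g ν) :
    Integrable (fun p => g p.2) π := by
  subst h; exact (integrable_map_measure hg.1 measurable_snd.aemeasurable).1 hg

end Marginals

section TransportCost

variable {X : Type*} [MeasurableSpace X]

/-- `wasserstein2` and `dTL2` are this quantity for the costs `dist x y ^ 2` and
`dist x y ^ 2 + dist (f x) (g y) ^ 2`, definitionally. -/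
noncomputable def sqrtTransportCost (c : X × X → ℝ) (μ ν : Measure X) : ℝ :=
  sInf { r : ℝ | ∃ π : Measure (X × X), π.fst = μ ∧ π.snd = ν ∧ r = Real.sqrt (∫ p, c p ∂π) }

lemma sqrtTransportCost_nonneg (c : X × X → ℝ) (μ ν : Measure X) :
    0 ≤ sqrtTransportCost c μ ν :=
  Real.sInf_nonneg <| by rintro _ ⟨π, -, -, rfl⟩; exact Real.sqrt_nonneg _

lemma sqrtTransportCost_le {c : X × X → ℝ} {μ ν : Measure X} {π : Measure (X × X)}
    (h₁ : π.fst = μ) (h₂ : π.snd = ν) :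
    sqrtTransportCost c μ ν ≤ Real.sqrt (∫ p, c p ∂π) :=
  csInf_le ⟨0, by rintro _ ⟨π, -, -, rfl⟩; exact Real.sqrt_nonneg _⟩ ⟨π, h₁, h₂, rfl⟩

lemma exists_coupling_sqrt_integral_lt {c : X × X → ℝ} {μ ν : Measure X}
    [IsProbabilityMeasure μ] [IsProbabilityMeasure ν] {b : ℝ} (h : sqrtTransportCost c μ ν < b) :
    ∃ π : Measure (X × X), π.fst = μ ∧ π.snd = ν ∧ Real.sqrt (∫ p, c p ∂π) < b := by
  obtain ⟨_, ⟨π, h₁, h₂, rfl⟩, hlt⟩ := exists_lt_of_csInf_lt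
    (by exact ⟨_, μ.prod ν, Measure.fst_prod, Measure.snd_prod, rfl⟩) h
  exact ⟨π, h₁, h₂, hlt⟩

variable {c : ℕ → X × X → ℝ} {μs : ℕ → Measure X} {μ : Measure X}

lemma exists_couplings_tendsto_integral_of_tendsto_sqrtTransportCost
    [∀ n, IsProbabilityMeasure (μs n)] [IsProbabilityMeasure μ] (hc : ∀ n p, 0 ≤ c n p)
    (h : Tendsto (fun n => sqrtTransportCost (c n) (μs n) μ) atTop (𝓝 0)) :
    ∃ π : ℕ → Measure (X × X), (∀ n, (π n).fst = μs n) ∧ (∀ n, (π n).snd = μ) ∧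
      Tendsto (fun n => ∫ p, c n p ∂π n) atTop (𝓝 0) := by
  choose π h₁ h₂ hlt using fun n : ℕ =>
    exists_coupling_sqrt_integral_lt (c := c n) (μ := μs n) (ν := μ)
      (lt_add_of_pos_right _ (Nat.one_div_pos_of_nat (n := n)))
  refine ⟨π, h₁, h₂, ?_⟩
  have hsqrt : Tendsto (fun n => Real.sqrt (∫ p, c n p ∂π n)) atTop (𝓝 0) :=
    squeeze_zero (fun _ => Real.sqrt_nonneg _) (fun n => (hlt n).le)
      (by simpa using h.add tendsto_one_div_add_atTop_nhds_zero_nat)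
  simpa [Real.sq_sqrt (integral_nonneg (hc _ ·))] using hsqrt.pow 2

lemma tendsto_sqrtTransportCost_of_couplings {π : ℕ → Measure (X × X)}
    (h₁ : ∀ n, (π n).fst = μs n) (h₂ : ∀ n, (π n).snd = μ)
    (h : Tendsto (fun n => ∫ p, c n p ∂π n) atTop (𝓝 0)) :
    Tendsto (fun n => sqrtTransportCost (c n) (μs n) μ) atTop (𝓝 0) :=
  squeeze_zero (fun _ => sqrtTransportCost_nonneg _ _ _)
    (fun n => sqrtTransportCost_le (h₁ n) (h₂ n)) (by simpa using h.sqrt)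

end TransportCost

section SecondMoment

variable {X : Type*} [NormedAddCommGroup X] [MeasurableSpace X] [BorelSpace X]
  [SecondCountableTopology X] {π : Measure (X × X)} {μ ν : Measure X}

lemma integrable_dist_sq_of_coupling (h₁ : π.fst = μ) (h₂ : π.snd = ν)
    (hμ : Integrable (fun x => ‖x‖ ^ 2) μ) (hν : Integrable (fun x => ‖x‖ ^ 2) ν) :
    Integrable (fun p : X × X => dist p.1 p.2 ^ 2) π := by
  have m₁ : MemLp (fun p : X × X => p.1) 2 π :=
    (memLp_two_iff_integrable_sq_norm measurable_fst.aestronglyMeasurable).2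
      (hμ.comp_fst_of_fst_eq h₁)
  have m₂ : MemLp (fun p : X × X => p.2) 2 π :=
    (memLp_two_iff_integrable_sq_norm measurable_snd.aestronglyMeasurable).2
      (hν.comp_snd_of_snd_eq h₂)
  simpa [dist_eq_norm] using (m₁.sub m₂).integrable_norm_pow two_ne_zero

end SecondMoment

lemma tendsto_zero_of_forall_eventually_le_mul {u : ℕ → ℝ} (h₀ : ∀ n, 0 ≤ u n) {C : ℝ}
    (hC : 0 < C) (h : ∀ ε > 0, ∀ᶠ n in atTop, u n ≤ C * ε) : Tendsto u atTop (𝓝 0) := by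
  refine tendsto_order.2 ⟨fun a ha => .of_forall fun n => ha.trans_le (h₀ n), fun a ha => ?_⟩
  filter_upwards [h (a / (2 * C)) (by positivity)] with n hn
  calc u n ≤ C * (a / (2 * C)) := hn
    _ = a / 2 := by field_simp
    _ < a := half_lt_self ha

section Tightness

variable {X : Type*} [MetricSpace X]

lemma BoundedContinuousFunction.exists_abs_sub_le (f : X →ᵇ ℝ) {K : Set X} (hK : IsCompact K)
    {ε : ℝ} (hε : 0 < ε) :
    ∃ δ > 0, ∀ x y, |f x - f y| ≤ ε + 2 * ‖f‖ * (Kᶜ.indicator 1 y + dist x y ^ 2 / δ ^ 2) := by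
  obtain ⟨δ, hδ, hδK⟩ := Metric.mem_uniformity_dist.1 <|
    hK.uniformContinuousAt_of_continuousAt f (fun x _ => f.continuous.continuousAt)
      (Metric.dist_mem_uniformity hε)
  refine ⟨δ, hδ, fun x y => ?_⟩
  have h2f : |f x - f y| ≤ 2 * ‖f‖ := by simpa [Real.dist_eq] using f.dist_le_two_norm x y
  have hind : 0 ≤ Kᶜ.indicator (1 : X → ℝ) y := Set.indicator_nonneg (fun _ _ => zero_le_one) _
  have hf0 : 0 ≤ ‖f‖ := norm_nonneg f
  by_cases hy : y ∈ K
  · by_cases hxy : dist y x < δ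
    · have : dist (f y) (f x) < ε := hδK hxy hy
      rw [dist_comm, Real.dist_eq] at this
      have : 0 ≤ 2 * ‖f‖ * (Kᶜ.indicator 1 y + dist x y ^ 2 / δ ^ 2) := by positivity
      linarith
    · have : 1 ≤ dist x y ^ 2 / δ ^ 2 := by
        rw [one_le_div (by positivity), dist_comm]
        exact pow_le_pow_left₀ hδ.le (not_lt.1 hxy) 2
      nlinarith
  · rw [Set.indicator_of_mem (Set.mem_compl hy), Pi.one_apply]
    have : 0 ≤ dist x y ^ 2 / δ ^ 2 := by positivity
    nlinarith

variable [MeasurableSpace X] [BorelSpace X]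

theorem tendsto_integral_abs_sub_of_tendsto_integral_dist_sq {μ : Measure X} [IsFiniteMeasure μ]
    [μ.InnerRegularCompactLTTop] {π : ℕ → Measure (X × X)} (hπ : ∀ n, (π n).snd = μ)
    (hint : ∀ n, Integrable (fun p : X × X => dist p.1 p.2 ^ 2) (π n))
    (h : Tendsto (fun n => ∫ p, dist p.1 p.2 ^ 2 ∂π n) atTop (𝓝 0)) (f : X →ᵇ ℝ) :
    Tendsto (fun n => ∫ p, |f p.1 - f p.2| ∂π n) atTop (𝓝 0) := by
  have := fun n => isFiniteMeasure_of_snd_eq (hπ n)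
  refine tendsto_zero_of_forall_eventually_le_mul (fun n => integral_nonneg fun _ => abs_nonneg _)
    (C := μ.real Set.univ + 4 * ‖f‖ + 1) (by positivity) fun ε hε => ?_
  obtain ⟨K, -, hK, hKμ⟩ := MeasurableSet.univ.exists_isCompact_sdiff_lt (measure_ne_top μ _)
    (ENNReal.ofReal_pos.2 hε).ne'
  rw [← Set.compl_eq_univ_sdiff] at hKμ
  obtain ⟨δ, hδ, hfK⟩ := f.exists_abs_sub_le hK hε
  have hKm : MeasurableSet Kᶜ := hK.isClosed.measurableSet.compl
  have hbound : ∀ n, ∫ p, |f p.1 - f p.2| ∂π n ≤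
      ε * μ.real Set.univ + 2 * ‖f‖ * (μ.real Kᶜ + (∫ p, dist p.1 p.2 ^ 2 ∂π n) / δ ^ 2) := by
    intro n
    have hindK : Integrable (fun p : X × X => Kᶜ.indicator (1 : X → ℝ) p.2) (π n) :=
      ((integrable_const 1).indicator hKm).comp_snd_of_snd_eq (hπ n)
    have hπμ : (π n).real Set.univ = μ.real Set.univ := by
      rw [measureReal_def, measureReal_def, ← Measure.snd_univ, hπ n]
    have hI : Integrable (fun p : X × X => Kᶜ.indicator 1 p.2 + dist p.1 p.2 ^ 2 / δ ^ 2) (π n) :=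
      hindK.add ((hint n).div_const _)
    calc ∫ p, |f p.1 - f p.2| ∂π n
        ≤ ∫ p, (ε + 2 * ‖f‖ * (Kᶜ.indicator 1 p.2 + dist p.1 p.2 ^ 2 / δ ^ 2)) ∂π n :=
          integral_mono_of_nonneg (.of_forall fun _ => abs_nonneg _)
            ((integrable_const ε).add (hI.const_mul _)) (.of_forall fun p => hfK p.1 p.2)
      _ = _ := by
          rw [integral_add (integrable_const ε) (hI.const_mul _),
            integral_const, integral_const_mul, integral_add hindK ((hint n).div_const _),
            integral_div, integral_comp_snd_of_snd_eq (hπ n)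
              (measurable_one.indicator hKm).aestronglyMeasurable, integral_indicator_one hKm,
            smul_eq_mul, hπμ]
          ring
  have hKε : μ.real Kᶜ ≤ ε := ENNReal.toReal_le_of_le_ofReal hε.le hKμ.le
  filter_upwards [(h.div_const (δ ^ 2)).eventually (eventually_le_nhds (by simpa using hε))]
    with n hn
  have := mul_le_mul_of_nonneg_left (add_le_add hKε hn) (by positivity : (0 : ℝ) ≤ 2 * ‖f‖)
  linarith [hbound n]

section Indicator

lemma abs_indicator_one_sub_indicator_one_le_one {α β : Type*} (s : Set α) (t : Set β) (x : α)
    (y : β) : |s.indicator (1 : α → ℝ) x - t.indicator 1 y| ≤ 1 := by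
  by_cases hx : x ∈ s <;> by_cases hy : y ∈ t <;> simp [hx, hy]

lemma dist_indicator_one_sq_eq_abs {α β : Type*} (s : Set α) (t : Set β) (x : α) (y : β) :
    dist (s.indicator (1 : α → ℝ) x) (t.indicator 1 y) ^ 2 =
      |s.indicator 1 x - t.indicator 1 y| := by
  by_cases hx : x ∈ s <;> by_cases hy : y ∈ t <;> simp [hx, hy, Real.dist_eq]

lemma dist_indicator_one_sq_eq_mul {α β : Type*} (s : Set α) (t : Set β) (x : α) (y : β) :
    dist (s.indicator (1 : α → ℝ) x) (t.indicator 1 y) ^ 2 =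
      (s.indicator 1 x - t.indicator 1 y) * (1 - 2 * t.indicator 1 y) := by
  by_cases hx : x ∈ s <;> by_cases hy : y ∈ t <;> norm_num [hx, hy, Real.dist_eq]

variable {α β : Type*} [MeasurableSpace α] [MeasurableSpace β] {ρ : Measure (α × β)}
  {s : Set α} {t : Set β}

lemma integrable_dist_indicator_one_sq [IsFiniteMeasure ρ] (hs : MeasurableSet s)
    (ht : MeasurableSet t) :
    Integrable (fun p : α × β => dist (s.indicator (1 : α → ℝ) p.1) (t.indicator 1 p.2) ^ 2) ρ :=
  .of_bound ((((measurable_one.indicator hs).comp measurable_fst).dist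
      ((measurable_one.indicator ht).comp measurable_snd)).pow_const 2).aestronglyMeasurable 1
    (.of_forall fun p => by
      rw [dist_indicator_one_sq_eq_abs, Real.norm_eq_abs, abs_abs]
      exact abs_indicator_one_sub_indicator_one_le_one _ _ _ _)

lemma integrable_indicator_one_sub_mul_comp_snd {ν : Measure β} (h₂ : ρ.snd = ν)
    (hs : MeasurableSet s) (ht : MeasurableSet t) {g : β → ℝ} (hg : Integrable g ν) :
    Integrable (fun p : α × β => (s.indicator 1 p.1 - t.indicator 1 p.2) * g p.2) ρ :=
  (hg.comp_snd_of_snd_eq h₂).bdd_mul (c := 1)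
    (((measurable_one.indicator hs).comp measurable_fst).sub
      ((measurable_one.indicator ht).comp measurable_snd)).aestronglyMeasurable
    (.of_forall fun _ => abs_indicator_one_sub_indicator_one_le_one _ _ _ _)

theorem abs_integral_indicator_one_sub_mul_le [TopologicalSpace β] [IsFiniteMeasure ρ]
    (hs : MeasurableSet s) (ht : MeasurableSet t) (g : β →ᵇ ℝ) :
    |∫ p, (s.indicator 1 p.1 - t.indicator 1 p.2) * g p.2 ∂ρ| ≤
      ‖g‖ * ∫ p, dist (s.indicator (1 : α → ℝ) p.1) (t.indicator 1 p.2) ^ 2 ∂ρ := by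
  rw [← integral_const_mul, ← Real.norm_eq_abs]
  refine norm_integral_le_of_norm_le ((integrable_dist_indicator_one_sq hs ht).const_mul _)
    (.of_forall fun p => ?_)
  rw [Real.norm_eq_abs, abs_mul, dist_indicator_one_sq_eq_abs, mul_comm]
  exact mul_le_mul_of_nonneg_right (Real.norm_eq_abs (g p.2) ▸ g.norm_coe_le_norm p.2)
    (abs_nonneg _)

lemma integral_dist_sq_add_dist_indicator_one_sq {X : Type*} [PseudoMetricSpace X]
    [MeasurableSpace X] {ρ : Measure (X × X)} [IsFiniteMeasure ρ]
    (hint : Integrable (fun p : X × X => dist p.1 p.2 ^ 2) ρ) {s t : Set X} (hs : MeasurableSet s)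
    (ht : MeasurableSet t) :
    ∫ p, dist p.1 p.2 ^ 2 + dist (s.indicator (1 : X → ℝ) p.1) (t.indicator 1 p.2) ^ 2 ∂ρ =
      ∫ p, dist p.1 p.2 ^ 2 ∂ρ +
        ∫ p, dist (s.indicator (1 : X → ℝ) p.1) (t.indicator 1 p.2) ^ 2 ∂ρ :=
  integral_add hint (integrable_dist_indicator_one_sq hs ht)

end Indicator

section Restrict

variable {X : Type*} [MetricSpace X] [MeasurableSpace X] [BorelSpace X]
  {π : Measure (X × X)} {μ' μ : Measure X} {A' A : Set X}

theorem abs_integral_restrict_sub_sub_le [IsFiniteMeasure μ] (h₁ : π.fst = μ') (h₂ : π.snd = μ)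
    (hA' : MeasurableSet A') (hA : MeasurableSet A) (g : X →ᵇ ℝ) :
    |(∫ x, g x ∂μ'.restrict A' - ∫ x, g x ∂μ.restrict A) -
        ∫ p, (A'.indicator 1 p.1 - A.indicator 1 p.2) * g p.2 ∂π| ≤
      ∫ p, |g p.1 - g p.2| ∂π := by
  have := isFiniteMeasure_of_snd_eq h₂
  have : IsFiniteMeasure μ' := h₁ ▸ inferInstance
  have hg := g.continuous.measurable
  have I₁ := ((g.integrable μ').indicator hA').comp_fst_of_fst_eq h₁
  have I₂ := ((g.integrable μ).indicator hA).comp_snd_of_snd_eq h₂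
  have I₁₂ : Integrable (fun p : X × X => A'.indicator g p.1 - A.indicator g p.2) π := I₁.sub I₂
  rw [← integral_indicator hA', ← integral_indicator hA,
    ← integral_comp_fst_of_fst_eq h₁ (hg.indicator hA').aestronglyMeasurable,
    ← integral_comp_snd_of_snd_eq h₂ (hg.indicator hA).aestronglyMeasurable,
    ← integral_sub I₁ I₂, ← integral_sub I₁₂
      (integrable_indicator_one_sub_mul_comp_snd h₂ hA' hA (g.integrable μ))]
  rw [← Real.norm_eq_abs]
  refine norm_integral_le_of_norm_le (((g.integrable μ').comp_fst_of_fst_eq h₁).sub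
    ((g.integrable μ).comp_snd_of_snd_eq h₂)).abs (.of_forall fun p => ?_)
  by_cases hx : p.1 ∈ A' <;> by_cases hy : p.2 ∈ A <;> simp [hx, hy]

theorem integral_dist_indicator_one_sq_le (h₂ : π.snd = μ) [IsFiniteMeasure μ]
    (hA' : MeasurableSet A') (hA : MeasurableSet A) (g : X →ᵇ ℝ) :
    ∫ p, dist (A'.indicator (1 : X → ℝ) p.1) (A.indicator 1 p.2) ^ 2 ∂π ≤
      |∫ p, (A'.indicator 1 p.1 - A.indicator 1 p.2) * g p.2 ∂π| +
        ∫ y, |1 - 2 * A.indicator 1 y - g y| ∂μ := by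
  have := isFiniteMeasure_of_snd_eq h₂
  have hh : Integrable (fun y => 1 - 2 * A.indicator (1 : X → ℝ) y - g y) μ :=
    ((integrable_const 1).sub (((integrable_const 1).indicator hA).const_mul 2)).sub
      (g.integrable μ)
  have I₁ := integrable_indicator_one_sub_mul_comp_snd h₂ hA' hA (g.integrable μ)
  have I₂ := integrable_indicator_one_sub_mul_comp_snd h₂ hA' hA hh
  calc ∫ p, dist (A'.indicator (1 : X → ℝ) p.1) (A.indicator 1 p.2) ^ 2 ∂π
      = ∫ p, (A'.indicator 1 p.1 - A.indicator 1 p.2) * g p.2 ∂π +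
          ∫ p, (A'.indicator 1 p.1 - A.indicator 1 p.2) *
            (1 - 2 * A.indicator 1 p.2 - g p.2) ∂π := by
        rw [← integral_add I₁ I₂]
        congr 1 with p
        rw [dist_indicator_one_sq_eq_mul]
        ring
    _ ≤ |∫ p, (A'.indicator 1 p.1 - A.indicator 1 p.2) * g p.2 ∂π| +
          ∫ p, |1 - 2 * A.indicator 1 p.2 - g p.2| ∂π := by
        refine add_le_add (le_abs_self _) ((le_abs_self _).trans ?_)
        rw [← Real.norm_eq_abs]
        refine norm_integral_le_of_norm_le (hh.abs.comp_snd_of_snd_eq h₂) (.of_forall fun p => ?_)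
        rw [Real.norm_eq_abs, abs_mul]
        exact mul_le_of_le_one_left (abs_nonneg _)
          (abs_indicator_one_sub_indicator_one_le_one _ _ _ _)
    _ = _ := by
        rw [integral_comp_snd_of_snd_eq h₂ hh.abs.aestronglyMeasurable]

end Restrict

section Sequences

variable {X : Type*} [MetricSpace X] [MeasurableSpace X] [BorelSpace X]
  {μs : ℕ → Measure X} {μ : Measure X} [IsFiniteMeasure μ] {π : ℕ → Measure (X × X)}
  {As : ℕ → Set X} {A : Set X}

theorem tendsto_integral_restrict_iff_tendsto_integral_indicator_one_sub_mul
    [μ.InnerRegularCompactLTTop] (h₁ : ∀ n, (π n).fst = μs n) (h₂ : ∀ n, (π n).snd = μ)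
    (hAs : ∀ n, MeasurableSet (As n)) (hA : MeasurableSet A)
    (hint : ∀ n, Integrable (fun p : X × X => dist p.1 p.2 ^ 2) (π n))
    (hd : Tendsto (fun n => ∫ p, dist p.1 p.2 ^ 2 ∂π n) atTop (𝓝 0)) (g : X →ᵇ ℝ) :
    Tendsto (fun n => ∫ x, g x ∂(μs n).restrict (As n)) atTop (𝓝 (∫ x, g x ∂μ.restrict A)) ↔
      Tendsto (fun n => ∫ p, ((As n).indicator 1 p.1 - A.indicator 1 p.2) * g p.2 ∂π n) atTop
        (𝓝 0) := by
  have herr : Tendsto (fun n => (∫ x, g x ∂(μs n).restrict (As n) - ∫ x, g x ∂μ.restrict A) -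
      ∫ p, ((As n).indicator 1 p.1 - A.indicator 1 p.2) * g p.2 ∂π n) atTop (𝓝 0) :=
    squeeze_zero_norm (fun n => abs_integral_restrict_sub_sub_le (h₁ n) (h₂ n) (hAs n) hA g)
      (tendsto_integral_abs_sub_of_tendsto_integral_dist_sq h₂ hint hd g)
  rw [← tendsto_sub_nhds_zero_iff]
  exact ⟨fun h => by simpa using h.sub herr, fun h => by simpa using herr.add h⟩

theorem tendsto_integral_restrict_of_tendsto_integral_dist_sq_add
    [μ.InnerRegularCompactLTTop] (h₁ : ∀ n, (π n).fst = μs n) (h₂ : ∀ n, (π n).snd = μ)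
    (hAs : ∀ n, MeasurableSet (As n)) (hA : MeasurableSet A)
    (hint : ∀ n, Integrable (fun p : X × X => dist p.1 p.2 ^ 2) (π n))
    (h : Tendsto (fun n => ∫ p, dist p.1 p.2 ^ 2 +
      dist ((As n).indicator (1 : X → ℝ) p.1) (A.indicator 1 p.2) ^ 2 ∂π n) atTop (𝓝 0))
    (g : X →ᵇ ℝ) :
    Tendsto (fun n => ∫ x, g x ∂(μs n).restrict (As n)) atTop (𝓝 (∫ x, g x ∂μ.restrict A)) := by
  have := fun n => isFiniteMeasure_of_snd_eq (h₂ n)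
  simp only [integral_dist_sq_add_dist_indicator_one_sq (hint _) (hAs _) hA] at h
  have hd₀ : ∀ n, 0 ≤ ∫ p, dist p.1 p.2 ^ 2 ∂π n := fun n => integral_nonneg fun _ => by positivity
  have hχ₀ : ∀ n, 0 ≤ ∫ p, dist ((As n).indicator (1 : X → ℝ) p.1) (A.indicator 1 p.2) ^ 2 ∂π n :=
    fun n => integral_nonneg fun _ => by positivity
  have hd := squeeze_zero hd₀ (fun n => le_add_of_nonneg_right (hχ₀ n)) h
  have hχ := squeeze_zero hχ₀ (fun n => le_add_of_nonneg_left (hd₀ n)) h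
  refine (tendsto_integral_restrict_iff_tendsto_integral_indicator_one_sub_mul
    h₁ h₂ hAs hA hint hd g).2 (squeeze_zero_norm
      (fun n => abs_integral_indicator_one_sub_mul_le (hAs n) hA g) ?_)
  simpa using hχ.const_mul ‖g‖

theorem tendsto_integral_dist_indicator_one_sq_of_tendsto_integral_restrict
    [μ.InnerRegularCompactLTTop] (h₁ : ∀ n, (π n).fst = μs n) (h₂ : ∀ n, (π n).snd = μ)
    (hAs : ∀ n, MeasurableSet (As n)) (hA : MeasurableSet A)
    (hint : ∀ n, Integrable (fun p : X × X => dist p.1 p.2 ^ 2) (π n))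
    (hd : Tendsto (fun n => ∫ p, dist p.1 p.2 ^ 2 ∂π n) atTop (𝓝 0))
    (hw : ∀ g : X →ᵇ ℝ, Tendsto (fun n => ∫ x, g x ∂(μs n).restrict (As n)) atTop
      (𝓝 (∫ x, g x ∂μ.restrict A))) :
    Tendsto (fun n => ∫ p, dist ((As n).indicator (1 : X → ℝ) p.1) (A.indicator 1 p.2) ^ 2 ∂π n)
      atTop (𝓝 0) := by
  refine tendsto_zero_of_forall_eventually_le_mul (fun n => integral_nonneg fun _ => by positivity)
    two_pos fun ε hε => ?_
  have hh : Integrable (fun y => 1 - 2 * A.indicator (1 : X → ℝ) y) μ :=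
    (integrable_const 1).sub (((integrable_const 1).indicator hA).const_mul 2)
  obtain ⟨g, hg, -⟩ := hh.exists_boundedContinuous_integral_sub_le hε
  have hgap := (tendsto_integral_restrict_iff_tendsto_integral_indicator_one_sub_mul
    h₁ h₂ hAs hA hint hd g).1 (hw g)
  filter_upwards [hgap.abs.eventually (eventually_le_nhds (by simpa using hε))] with n hn
  have := integral_dist_indicator_one_sq_le (h₂ n) (hAs n) hA g
  simp only [Real.norm_eq_abs] at hg
  linarith

end Sequences

/-- If `μ_n → μ` in the Wasserstein sense, then `(μ_n, χ_{A_n}) → (μ, χ_A)` in `TL²` iff the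
restricted measures `μ_n⌊A_n` converge weakly to `μ⌊A`. -/
theorem indicator_TL2_iff_weak_conv_of_restrictions (N : ℕ)
    (μ : Measure (EuclideanSpace ℝ (Fin N))) [IsProbabilityMeasure μ]
    (h2 : Integrable (fun x => ‖x‖ ^ 2) μ)
    (μs : ℕ → Measure (EuclideanSpace ℝ (Fin N)))
    (hprob : ∀ n, IsProbabilityMeasure (μs n))
    (h2s : ∀ n, Integrable (fun x => ‖x‖ ^ 2) (μs n))
    (hW : Tendsto (fun n => wasserstein2 (μs n) μ) atTop (nhds 0))
    (A : Set (EuclideanSpace ℝ (Fin N))) (hA : MeasurableSet A)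
    (As : ℕ → Set (EuclideanSpace ℝ (Fin N))) (hAs : ∀ n, MeasurableSet (As n)) :
    Tendsto (fun n => dTL2 (μs n) μ
        ((As n).indicator fun _ => (1 : ℝ)) (A.indicator fun _ => (1 : ℝ)))
      atTop (nhds 0)
    ↔ ∀ f : BoundedContinuousFunction (EuclideanSpace ℝ (Fin N)) ℝ,
        Tendsto (fun n => ∫ x, f x ∂((μs n).restrict (As n))) atTop
          (nhds (∫ x, f x ∂(μ.restrict A))) := by
  have := hprob
  constructor
  · intro hTL
    obtain ⟨π, h₁, h₂, hcost⟩ :=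
      exists_couplings_tendsto_integral_of_tendsto_sqrtTransportCost
        (fun _ _ => by positivity) hTL
    exact tendsto_integral_restrict_of_tendsto_integral_dist_sq_add h₁ h₂ hAs hA
      (fun n => integrable_dist_sq_of_coupling (h₁ n) (h₂ n) (h2s n) h2) hcost
  · intro hw
    obtain ⟨π, h₁, h₂, hd⟩ :=
      exists_couplings_tendsto_integral_of_tendsto_sqrtTransportCost
        (fun _ _ => by positivity) hW
    have hint := fun n => integrable_dist_sq_of_coupling (h₁ n) (h₂ n) (h2s n) h2
    have := fun n => isFiniteMeasure_of_snd_eq (h₂ n)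
    refine tendsto_sqrtTransportCost_of_couplings (c := fun n p =>
      dist p.1 p.2 ^ 2 + dist ((As n).indicator 1 p.1) (A.indicator 1 p.2) ^ 2) h₁ h₂ ?_
    simp only [integral_dist_sq_add_dist_indicator_one_sq (hint _) (hAs _) hA]
    simpa using hd.add (tendsto_integral_dist_indicator_one_sq_of_tendsto_integral_restrict
      h₁ h₂ hAs hA hint hd hw)
end Tightness
end
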